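/- Let X be a topological space and suppose the quotient fibration π_G : P'X/G → B(X;2) admits continuous sections over open sets U_1, …, U_k covering B(X;2). Then F(X;2) can be partitioned into pairwise disjoint G-invariant subsets V_1, …, V_k with V_i ⊆ q⁻¹(U_i), such that the endpoint fibration π' : P'X → F(X;2) admits a continuous G-equivariant section over each V_i. Consequently there is a symmetric motion planner on X with at most k + 1 domains of continuity. -/

import Mathlib

open scoped ENat

universe u v

/-- Space of paths in `X`: continuous maps from the unit interval. -/
abbrev PathSp (X : Type u) [TopologicalSpace X] := C(unitInterval, X)

/-- Reversal of a path. -/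
def pathRev {X : Type u} [TopologicalSpace X] (γ : PathSp X) : PathSp X :=
  γ.comp ⟨unitInterval.symm, unitInterval.continuous_symm⟩

/-- `P'X`: paths with distinct endpoints. -/
def PpX (X : Type u) [TopologicalSpace X] := {γ : PathSp X // γ 0 ≠ γ 1}

instance (X : Type u) [TopologicalSpace X] : TopologicalSpace (PpX X) :=
  instTopologicalSpaceSubtype

/-- Reversal involution on `P'X`. -/
def revP {X : Type u} [TopologicalSpace X] (γ : PpX X) : PpX X :=
  ⟨pathRev γ.1, by
    simp only [pathRev, ContinuousMap.comp_apply, ContinuousMap.coe_mk,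
      unitInterval.symm_zero, unitInterval.symm_one]
    exact γ.2.symm⟩

/-- `F(X;2)`: ordered configuration space of two distinct points. -/
def F2 (X : Type u) [TopologicalSpace X] := {z : X × X // z.1 ≠ z.2}

instance (X : Type u) [TopologicalSpace X] : TopologicalSpace (F2 X) :=
  instTopologicalSpaceSubtype

/-- The swap involution on `F(X;2)`. -/
def swapF {X : Type u} [TopologicalSpace X] (z : F2 X) : F2 X :=
  ⟨(z.1.2, z.1.1), z.2.symm⟩

/-- The two-endpoint map `π' : P'X → F(X;2)`. -/
def pip {X : Type u} [TopologicalSpace X] (γ : PpX X) : F2 X :=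
  ⟨(γ.1 0, γ.1 1), γ.2⟩

/-- Quotient of `P'X` by the reversal involution. -/
def PpQ (X : Type u) [TopologicalSpace X] := Quot (fun a b : PpX X => b = revP a)

/-- `B(X;2)`: unordered configuration space, quotient of `F(X;2)` by the swap. -/
def BX2 (X : Type u) [TopologicalSpace X] := Quot (fun a b : F2 X => b = swapF a)

instance (X : Type u) [TopologicalSpace X] : TopologicalSpace (PpQ X) :=
  inferInstanceAs (TopologicalSpace (Quot _))
instance (X : Type u) [TopologicalSpace X] : TopologicalSpace (BX2 X) :=
  inferInstanceAs (TopologicalSpace (Quot _))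

/-- The quotient fibration `π_G : P'X/G → B(X;2)`. -/
def piG (X : Type u) [TopologicalSpace X] : PpQ X → BX2 X :=
  Quot.map pip (by
    rintro a b rfl
    refine Subtype.ext (Prod.ext ?_ ?_) <;>
      simp [pip, revP, swapF, pathRev])

/-- `p` admits continuous local sections over an open cover of the base by `k` sets. -/
def SecCover {E : Type u} {B : Type v} [TopologicalSpace E] [TopologicalSpace B]
    (p : E → B) (k : ℕ) : Prop :=
  ∃ U : Fin k → Set B, (∀ i, IsOpen (U i)) ∧ (⋃ i, U i) = Set.univ ∧
    ∀ i, ∃ s : C(U i, E), ∀ x : U i, p (s x) = (x : B)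

/-- The Schwarz genus of a map: minimal number of open sets covering the base over each
of which the map admits a continuous section (`⊤` if there is no such finite cover). -/
noncomputable def genus {E : Type u} {B : Type v} [TopologicalSpace E] [TopologicalSpace B]
    (p : E → B) : ℕ∞ :=
  sInf {m : ℕ∞ | ∃ k : ℕ, m = (k : ℕ∞) ∧ SecCover p k}

/-- Topological complexity: the Schwarz genus of the two-endpoint path fibration. -/
noncomputable def TCx (X : Type u) [TopologicalSpace X] : ℕ∞ :=
  genus (fun γ : PathSp X => (γ 0, γ 1))

/-- Symmetric topological complexity: `1 +` the Schwarz genus of `π_G`. -/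
noncomputable def TCS (X : Type u) [TopologicalSpace X] : ℕ∞ :=
  1 + genus (piG X)

/-- The quotient map `q : F(X;2) → B(X;2)`. -/
def qF (X : Type u) [TopologicalSpace X] : F2 X → BX2 X :=
  Quot.mk (fun a b : F2 X => b = swapF a)

/-!
A point of `P'X/G` over `q z` is a pair `{γ, γ⁻¹}` of mutually reversed paths, and exactly one
of them starts at the first coordinate of `z`. Picking that one is continuous, because
`γ ↦ ([γ], π' γ)` is an embedding of `P'X` into `P'X/G × F(X;2)`: near `γ` the reversed path
has its endpoints in disjoint neighbourhoods of the swapped endpoints. So a section of `π_G`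
over `U` lifts to a unique `G`-equivariant section of `π'` over any part of `q⁻¹(U)`. Making the
cover disjoint (`V_i = q⁻¹(U_i \ ⋃_{j<i} U_j)`) and gluing gives an equivariant section of `π'`
over all of `F(X;2)`, continuous on each `V_i`; the constant paths on the diagonal supply the
`(k+1)`-st domain of the symmetric planner.
-/

open Set Function Topology

namespace Quot

variable {E : Type*} {f : E → E}

theorem mk_eq_mk_iff_of_involutive (hf : Involutive f) {a b : E} :
    Quot.mk (fun x y => y = f x) a = Quot.mk _ b ↔ b = a ∨ b = f a := by
  refine Quot.eq.trans ⟨fun h => ?_, ?_⟩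
  · induction h with
    | rel x y h => exact Or.inr h
    | refl => exact Or.inl rfl
    | symm x y _ ih =>
      rcases ih with rfl | rfl
      · exact Or.inl rfl
      · exact Or.inr (hf x).symm
    | trans x y z _ _ ihxy ihyz =>
      rcases ihxy with rfl | rfl <;> rcases ihyz with rfl | rfl <;> simp [hf _]
  · rintro (rfl | rfl)
    · exact .refl _
    · exact .rel _ _ rfl

theorem isOpenMap_mk_of_involutive [TopologicalSpace E] (hf : Involutive f)
    (hfc : Continuous f) : IsOpenMap (Quot.mk (fun x y : E => y = f x)) := by
  intro O hO
  have hsat : Quot.mk (fun x y : E => y = f x) ⁻¹' (Quot.mk _ '' O) = O ∪ f ⁻¹' O := by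
    ext e
    simp only [mem_preimage, mem_image, mk_eq_mk_iff_of_involutive hf, mem_union]
    constructor
    · rintro ⟨d, hd, rfl | rfl⟩
      · exact Or.inl hd
      · exact Or.inr (by rwa [hf d])
    · rintro (he | he)
      · exact ⟨e, he, Or.inl rfl⟩
      · exact ⟨f e, he, Or.inr (hf e).symm⟩
  rw [← isQuotientMap_quot_mk.isOpen_preimage, hsat]
  exact hO.union (hO.preimage hfc)

theorem isEmbedding_mk_prod_of_involutive [TopologicalSpace E] {Y : Type*} [TopologicalSpace Y]
    [T2Space Y] (hf : Involutive f) (hfc : Continuous f) {g : E → Y} (hg : Continuous g)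
    (hgf : ∀ e, g (f e) ≠ g e) :
    IsEmbedding (fun e => (Quot.mk (fun x y : E => y = f x) e, g e)) := by
  refine ⟨isInducing_iff_nhds.2 fun e => le_antisymm ?_ ?_, ?_⟩
  · exact (continuous_quot_mk.prodMk hg).tendsto e |>.le_comap
  · intro M hM
    obtain ⟨M₀, hM₀M, hM₀, heM₀⟩ := mem_nhds_iff.1 hM
    obtain ⟨A, B, hA, hB, heA, hfeB, hAB⟩ := t2_separation (hgf e).symm
    set M' := M₀ ∩ g ⁻¹' A ∩ (g ∘ f) ⁻¹' B
    have hM' : IsOpen M' := (hM₀.inter (hA.preimage hg)).inter (hB.preimage (hg.comp hfc))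
    refine Filter.mem_comap.2 ⟨(Quot.mk _ '' M') ×ˢ A,
      prod_mem_nhds ((isOpenMap_mk_of_involutive hf hfc M' hM').mem_nhds
        ⟨e, ⟨⟨heM₀, heA⟩, hfeB⟩, rfl⟩) (hA.mem_nhds heA), ?_⟩
    rintro d ⟨⟨d', hd', hd'd⟩, hdA⟩
    rcases (mk_eq_mk_iff_of_involutive hf).1 hd'd with rfl | rfl
    · exact hM₀M hd'.1.1
    · exact (hAB.ne_of_mem hdA hd'.2 rfl).elim
  · rintro a b hab
    obtain ⟨hmk, hg'⟩ := Prod.mk.inj hab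
    rcases (mk_eq_mk_iff_of_involutive hf).1 hmk with rfl | rfl
    · rfl
    · exact (hgf a (hg'.symm)).elim

end Quot

section EquivariantSections

variable {X : Type u} [TopologicalSpace X]

theorem revP_involutive : Involutive (revP (X := X)) := fun γ =>
  Subtype.ext (ContinuousMap.ext fun t => by simp [revP, pathRev, unitInterval.symm_symm])

theorem swapF_involutive : Involutive (swapF (X := X)) := fun _ => rfl

theorem continuous_revP : Continuous (revP (X := X)) :=
  ((ContinuousMap.continuous_precomp _).comp continuous_subtype_val).subtype_mk _

theorem pip_revP (γ : PpX X) : pip (revP γ) = swapF (pip γ) := by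
  refine Subtype.ext (Prod.ext ?_ ?_) <;> simp [pip, revP, swapF, pathRev]

theorem swapF_ne (z : F2 X) : swapF z ≠ z := fun h => z.2 (congrArg (·.1.2) h)

theorem qF_swapF (z : F2 X) : qF X (swapF z) = qF X z :=
  (Quot.sound (r := fun a b : F2 X => b = swapF a) rfl).symm

theorem mk_revP (γ : PpX X) : (Quot.mk _ (revP γ) : PpQ X) = Quot.mk _ γ :=
  (Quot.sound (r := fun a b : PpX X => b = revP a) rfl).symm

theorem continuous_pip : Continuous (pip (X := X)) :=
  (((continuous_eval_const 0).comp continuous_subtype_val).prodMk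
    ((continuous_eval_const 1).comp continuous_subtype_val)).subtype_mk _

instance [T2Space X] : T2Space (F2 X) := inferInstanceAs (T2Space {z : X × X // z.1 ≠ z.2})

theorem isEmbedding_mk_pip [T2Space X] :
    IsEmbedding (fun γ : PpX X => ((Quot.mk _ γ : PpQ X), pip γ)) :=
  Quot.isEmbedding_mk_prod_of_involutive revP_involutive continuous_revP
    continuous_pip fun γ => by rw [pip_revP]; exact swapF_ne _

theorem exists_mk_eq_and_pip_eq {c : PpQ X} {z : F2 X} (h : piG X c = qF X z) :
    ∃ γ : PpX X, Quot.mk _ γ = c ∧ pip γ = z := by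
  obtain ⟨γ, rfl⟩ := Quot.exists_rep c
  rcases (Quot.mk_eq_mk_iff_of_involutive swapF_involutive).1 h with rfl | rfl
  · exact ⟨γ, rfl, rfl⟩
  · exact ⟨revP γ, mk_revP γ, pip_revP γ⟩

/-- `P'X` is the pullback of `π_G` along `q`. -/
theorem exists_continuous_lift [T2Space X] {Z : Type*} [TopologicalSpace Z] {c : Z → PpQ X}
    {z : Z → F2 X} (hc : Continuous c) (hz : Continuous z)
    (h : ∀ w, piG X (c w) = qF X (z w)) :
    ∃ s : C(Z, PpX X), ∀ w, Quot.mk _ (s w) = c w ∧ pip (s w) = z w := by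
  choose s hs using fun w => exists_mk_eq_and_pip_eq (h w)
  refine ⟨⟨s, isEmbedding_mk_pip.continuous_iff.2 ?_⟩, hs⟩
  exact (hc.prodMk hz).congr fun w => (Prod.ext (hs w).1 (hs w).2).symm

theorem exists_equivariant_section_of_subset_preimage [T2Space X] {U : Set (BX2 X)}
    (σ : C(U, PpQ X)) (hσ : ∀ u, piG X (σ u) = u) {V : Set (F2 X)} (hVU : V ⊆ qF X ⁻¹' U) :
    ∃ s : C(V, PpX X), (∀ z : V, pip (s z) = (z : F2 X)) ∧
      ∀ (z : V) (h : swapF (z : F2 X) ∈ V), s ⟨swapF (z : F2 X), h⟩ = revP (s z) := by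
  set c : V → PpQ X := fun z => σ ⟨qF X z, hVU z.2⟩
  obtain ⟨s, hs⟩ := exists_continuous_lift (c := c)
    (σ.continuous.comp ((continuous_quot_mk.comp continuous_subtype_val).subtype_mk _))
    continuous_subtype_val fun z => hσ _
  refine ⟨s, fun z => (hs z).2, fun z h => isEmbedding_mk_pip.injective (Prod.ext ?_ ?_)⟩
  · change Quot.mk _ _ = Quot.mk _ _
    rw [(hs _).1, mk_revP, (hs z).1]
    exact congrArg σ (Subtype.ext (qF_swapF _))
  · change pip _ = pip _
    rw [(hs _).2, pip_revP, (hs z).2]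

end EquivariantSections

section SymmetricPlanner

variable {X : Type u} [TopologicalSpace X]

open Classical in
noncomputable def symmPlanner (σ : F2 X → PpX X) (p : X × X) : PathSp X :=
  if h : p.1 = p.2 then ContinuousMap.const _ p.1 else (σ ⟨p, h⟩).1

variable {σ : F2 X → PpX X}

theorem symmPlanner_endpoints (hσ : ∀ z, pip (σ z) = z) (A B : X) :
    symmPlanner σ (A, B) 0 = A ∧ symmPlanner σ (A, B) 1 = B := by
  unfold symmPlanner
  split_ifs with h
  · exact ⟨rfl, h⟩
  · have := hσ ⟨(A, B), h⟩
    exact ⟨congrArg (·.1.1) this, congrArg (·.1.2) this⟩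

theorem symmPlanner_diag (A : X) (t : unitInterval) : symmPlanner σ (A, A) t = A := by
  simp [symmPlanner]

theorem symmPlanner_swap (hσ : ∀ z, σ (swapF z) = revP (σ z)) (A B : X) (t : unitInterval) :
    symmPlanner σ (B, A) t = symmPlanner σ (A, B) (unitInterval.symm t) := by
  unfold symmPlanner
  by_cases h : A = B
  · subst h; simp
  · rw [dif_neg (Ne.symm h), dif_neg h]
    exact congrArg (fun γ : PpX X => γ.1 t) (hσ ⟨(A, B), h⟩)

theorem continuousOn_symmPlanner_diagonal : ContinuousOn (symmPlanner σ) (diagonal X) :=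
  (ContinuousMap.continuous_const'.comp continuous_fst).continuousOn.congr
    fun p hp => by rw [symmPlanner, dif_pos (show p.1 = p.2 from hp)]; rfl

theorem continuousOn_symmPlanner_image {V : Set (F2 X)} (hσ : ContinuousOn σ V) :
    ContinuousOn (symmPlanner σ) (Subtype.val '' V) := by
  refine ((IsInducing.subtypeVal (t := {z : X × X | z.1 ≠ z.2})).continuousOn_image_iff
    (g := symmPlanner σ) (s := V)).2 ?_
  exact (continuous_subtype_val.comp_continuousOn hσ).congr fun z _ => dif_neg z.2

theorem iUnion_cons_diagonal {k : ℕ} {V : Fin k → Set (F2 X)} (hV : ⋃ i, V i = univ) :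
    ⋃ j, (Fin.cons (diagonal X) (fun i => Subtype.val '' V i) : Fin (k + 1) → Set (X × X)) j
      = univ := by
  refine eq_univ_of_forall fun p => mem_iUnion.2 (Fin.exists_fin_succ.2 ?_)
  by_cases h : p.1 = p.2
  · exact Or.inl h
  · obtain ⟨i, hi⟩ := mem_iUnion.1 (hV ▸ mem_univ (⟨p, h⟩ : F2 X))
    exact Or.inr ⟨i, ⟨p, h⟩, hi, rfl⟩

theorem pairwise_disjoint_cons_diagonal {k : ℕ} {V : Fin k → Set (F2 X)}
    (hV : Pairwise fun i j => Disjoint (V i) (V j)) :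
    Pairwise fun i j => Disjoint
      ((Fin.cons (diagonal X) (fun i => Subtype.val '' V i) : Fin (k + 1) → Set (X × X)) i)
      ((Fin.cons (diagonal X) (fun i => Subtype.val '' V i) : Fin (k + 1) → Set (X × X)) j) := by
  have hdiag : ∀ i, Disjoint (diagonal X) (Subtype.val '' V i) := fun i =>
    disjoint_left.2 fun p hp ⟨z, _, hz⟩ => z.2 (hz ▸ hp)
  intro i j hij
  cases i using Fin.cases <;> cases j using Fin.cases
  · exact (hij rfl).elim
  · exact hdiag _
  · exact (hdiag _).symm
  · exact (hV (Fin.succ_injective _ |>.ne_iff.1 hij)).image Subtype.val_injective.injOn (subset_univ _) (subset_univ _)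

theorem exists_equivariant_liftCover {k : ℕ} {V : Fin k → Set (F2 X)}
    (hdisj : Pairwise fun i j => Disjoint (V i) (V j)) (hcov : ⋃ i, V i = univ)
    (hswap : ∀ i, ∀ z ∈ V i, swapF z ∈ V i) (S : ∀ i, C(V i, PpX X))
    (hpip : ∀ i (z : V i), pip (S i z) = z)
    (hrev : ∀ i (z : V i) (h : swapF (z : F2 X) ∈ V i), S i ⟨swapF z, h⟩ = revP (S i z)) :
    ∃ σ : F2 X → PpX X, (∀ z, pip (σ z) = z) ∧ (∀ z, σ (swapF z) = revP (σ z)) ∧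
      ∀ i, ContinuousOn σ (V i) := by
  have hcompat : ∀ i j z (hi : z ∈ V i) (hj : z ∈ V j), S i ⟨z, hi⟩ = S j ⟨z, hj⟩ := by
    intro i j z hi hj
    obtain rfl : i = j := by_contra fun hij => disjoint_left.1 (hdisj hij) hi hj
    rfl
  set σ := liftCover V (fun i z => S i z) hcompat hcov
  have hσ : ∀ i z (hz : z ∈ V i), σ z = S i ⟨z, hz⟩ := fun i z hz => liftCover_of_mem hz
  have hmem : ∀ z, ∃ i, z ∈ V i := fun z => mem_iUnion.1 (hcov ▸ mem_univ z)
  refine ⟨σ, fun z => ?_, fun z => ?_, fun i => ?_⟩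
  · obtain ⟨i, hi⟩ := hmem z
    rw [hσ i z hi]
    exact hpip i ⟨z, hi⟩
  · obtain ⟨i, hi⟩ := hmem z
    rw [hσ i _ (hswap i z hi), hσ i z hi]
    exact hrev i ⟨z, hi⟩ (hswap i z hi)
  · rw [continuousOn_iff_continuous_domRestrict]
    exact (S i).continuous.congr fun z => (hσ i z z.2).symm

end SymmetricPlanner

theorem stmt4_general (X : Type u) [TopologicalSpace X] [TopologicalSpace.MetrizableSpace X]
    (k : ℕ) (U : Fin k → Set (BX2 X))
    (hcov : (⋃ i, U i) = Set.univ)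
    (hsec : ∀ i, ∃ s : C(U i, PpQ X), ∀ u : U i, piG X (s u) = (u : BX2 X)) :
    (∃ V : Fin k → Set (F2 X),
      (Pairwise fun i j => Disjoint (V i) (V j)) ∧
      (⋃ i, V i) = Set.univ ∧
      (∀ i, V i ⊆ qF X ⁻¹' (U i)) ∧
      (∀ i, ∀ z ∈ V i, swapF z ∈ V i) ∧
      (∀ i, ∃ s : C(V i, PpX X),
        (∀ z : V i, pip (s z) = (z : F2 X)) ∧
        (∀ (z : V i) (h : swapF (z : F2 X) ∈ V i), s ⟨swapF (z : F2 X), h⟩ = revP (s z)))) ∧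
    (∃ s : X × X → PathSp X,
      (∀ A B : X, (s (A, B)) 0 = A ∧ (s (A, B)) 1 = B) ∧
      (∀ (A : X) (t : unitInterval), (s (A, A)) t = A) ∧
      (∀ (A B : X) (t : unitInterval), (s (B, A)) t = (s (A, B)) (unitInterval.symm t)) ∧
      ∃ W : Fin (k + 1) → Set (X × X),
        (⋃ j, W j) = Set.univ ∧
        (Pairwise fun i j => Disjoint (W i) (W j)) ∧
        ∀ j, ContinuousOn s (W j)) := by
  set V : Fin k → Set (F2 X) := fun i => qF X ⁻¹' disjointed U i
  have hVU : ∀ i, V i ⊆ qF X ⁻¹' U i := fun i => preimage_mono (disjointed_subset U i)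
  have hVdisj : Pairwise fun i j => Disjoint (V i) (V j) := fun i j hij =>
    (disjoint_disjointed U hij).preimage _
  have hVcov : ⋃ i, V i = univ := by
    simp only [V, ← preimage_iUnion, iUnion_disjointed, hcov, preimage_univ]
  have hVswap : ∀ i, ∀ z ∈ V i, swapF z ∈ V i := fun i z hz => by
    simpa only [V, mem_preimage, qF_swapF] using hz
  choose S hpip hrev using fun i => (hsec i).elim fun σ hσ =>
    exists_equivariant_section_of_subset_preimage σ hσ (hVU i)
  obtain ⟨σ, hσpip, hσrev, hσcont⟩ :=
    exists_equivariant_liftCover hVdisj hVcov hVswap S hpip hrev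
  refine ⟨⟨V, hVdisj, hVcov, hVU, hVswap, fun i => ⟨S i, hpip i, hrev i⟩⟩,
    symmPlanner σ, symmPlanner_endpoints hσpip, fun _ _ => symmPlanner_diag _ _,
    symmPlanner_swap hσrev, Fin.cons (diagonal X) (fun i => Subtype.val '' V i),
    iUnion_cons_diagonal hVcov, pairwise_disjoint_cons_diagonal hVdisj, fun j => ?_⟩
  cases j using Fin.cases
  · exact continuousOn_symmPlanner_diagonal
  · exact continuousOn_symmPlanner_image (hσcont _)

/-- From sections of `π_G` over an open cover `U₁,…,U_k` of `B(X;2)` one gets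
a partition of `F(X;2)` into disjoint `G`-invariant sets `V_i ⊆ q⁻¹(U_i)` carrying
continuous equivariant sections of `π'`, and consequently a symmetric motion planner on
`X` with at most `k+1` domains of continuity. -/
theorem stmt4 (X : Type u) [TopologicalSpace X] [TopologicalSpace.MetrizableSpace X]
    [PathConnectedSpace X] (k : ℕ) (U : Fin k → Set (BX2 X))
    (hopen : ∀ i, IsOpen (U i)) (hcov : (⋃ i, U i) = Set.univ)
    (hsec : ∀ i, ∃ s : C(U i, PpQ X), ∀ u : U i, piG X (s u) = (u : BX2 X)) :
    (∃ V : Fin k → Set (F2 X),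
      (Pairwise fun i j => Disjoint (V i) (V j)) ∧
      (⋃ i, V i) = Set.univ ∧
      (∀ i, V i ⊆ qF X ⁻¹' (U i)) ∧
      (∀ i, ∀ z ∈ V i, swapF z ∈ V i) ∧
      (∀ i, ∃ s : C(V i, PpX X),
        (∀ z : V i, pip (s z) = (z : F2 X)) ∧
        (∀ (z : V i) (h : swapF (z : F2 X) ∈ V i), s ⟨swapF (z : F2 X), h⟩ = revP (s z)))) ∧
    (∃ s : X × X → PathSp X,
      (∀ A B : X, (s (A, B)) 0 = A ∧ (s (A, B)) 1 = B) ∧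
      (∀ (A : X) (t : unitInterval), (s (A, A)) t = A) ∧
      (∀ (A B : X) (t : unitInterval), (s (B, A)) t = (s (A, B)) (unitInterval.symm t)) ∧
      ∃ W : Fin (k + 1) → Set (X × X),
        (⋃ j, W j) = Set.univ ∧
        (Pairwise fun i j => Disjoint (W i) (W j)) ∧
        ∀ j, ContinuousOn s (W j)) :=
  stmt4_general X k U hcov hsec
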